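/- Let n ≥ 4 be even, let w be a one-dimensional isotropic subspace of (ZMod 2)^{2n} and y a maximal isotropic subspace with w ⊆ y. Then |{x ∈ L^n_n : dim(x∩y) = n/2}| ≥ 2^{n/2} · |{x ∈ L^n_n : w ⊆ x and dim(x∩y) = n/2}|. (Equivalently, with Q the number of ordered pairs of maximal isotropic subspaces intersecting in dimension n/2 and Δ(G_w) the degree of the graph G_w, one has Q/(|L^n_n|·Δ(G_w)) ≥ 2^{n/2}.) -/

import Mathlib

open Finset

abbrev F2 := ZMod 2
/-- `F2^{2n}`, split into the first and last `n` coordinates. -/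
abbrev PV (n : ℕ) := (Fin n → F2) × (Fin n → F2)

/-- Symplectic product on `F2^{2n}`: zero iff `a₁·b₂ = a₂·b₁`. -/
def symp {n : ℕ} (a b : PV n) : F2 :=
  (∑ i, a.1 i * b.2 i) + (∑ i, a.2 i * b.1 i)

/-- A subspace is isotropic if the symplectic product vanishes on it. -/
def IsIsotropic {n : ℕ} (S : Submodule F2 (PV n)) : Prop :=
  ∀ x ∈ S, ∀ y ∈ S, symp x y = 0

/-- `Lset n k` = `L^n_k`, the set of `k`-dimensional isotropic subspaces of `F2^{2n}`. -/
def Lset (n k : ℕ) : Set (Submodule F2 (PV n)) :=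
  {S | IsIsotropic S ∧ Module.finrank F2 S = k}

/-- Integer lift of a vector over `F2`, with values in `{0,1} ⊆ ℤ`. -/
def liftZ {n : ℕ} (v : Fin n → F2) : Fin n → ℤ := fun i => ((v i).val : ℤ)

def dotZ {n : ℕ} (a b : Fin n → ℤ) : ℤ := ∑ i, a i * b i

/-- The phase `i^{x̂₁·x̂₂} · i^{ŷ₁·ŷ₂} · i^{−((x+y)^^₁·(x+y)^^₂)} · (−1)^{x̂₂·ŷ₁}`. -/
noncomputable def phase {n : ℕ} (x y : PV n) : ℂ :=
  Complex.I ^ (dotZ (liftZ x.1) (liftZ x.2)) *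
  Complex.I ^ (dotZ (liftZ y.1) (liftZ y.2)) *
  Complex.I ^ (-(dotZ (liftZ (x + y).1) (liftZ (x + y).2))) *
  (-1 : ℂ) ^ (dotZ (liftZ x.2) (liftZ y.1))

/-- `w(x,y) ∈ {0,1} ⊆ F2`: zero iff the phase equals `1`. -/
noncomputable def wght {n : ℕ} (x y : PV n) : F2 :=
  if phase x y = 1 then 0 else 1

/-- An outcome of an isotropic subspace `S` is `f : S → F2` with
`f(x+y) = f(x)+f(y)+w(x,y)`. -/
def IsOutcome {n : ℕ} (S : Submodule F2 (PV n)) (f : S → F2) : Prop :=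
  ∀ x y : S, f (x + y) = f x + f y + wght (x : PV n) (y : PV n)

/-- Two outcomes are consistent if they agree on the intersection of their domains. -/
def ConsistentOn {n : ℕ} {S₁ S₂ : Submodule F2 (PV n)} (f₁ : S₁ → F2) (f₂ : S₂ → F2) : Prop :=
  ∀ v (h1 : v ∈ S₁) (h2 : v ∈ S₂), f₁ ⟨v, h1⟩ = f₂ ⟨v, h2⟩

/-!
Let `A` be the set of maximal isotropic `x` with `dim (x ∩ y) = n/2`. The symplectic
automorphisms stabilising `y` act transitively on the nonzero vectors of `y` (a product of three
transvections moves `v₁` to `v₂`), so every nonzero `v ∈ y` lies in the same number `N` of members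
of `A`. Counting the pairs `(x, v)` with `0 ≠ v ∈ x ∩ y` in two ways gives
`|A| (2^{n/2} - 1) = (2^n - 1) N`, i.e. `|A| = (2^{n/2} + 1) N`.
-/

theorem exists_eq_span_singleton_of_finrank_eq_one {K V : Type*} [Field K] [AddCommGroup V]
    [Module K V] {w : Submodule K V} (hw : Module.finrank K w = 1) : ∃ v, v ≠ 0 ∧ w = K ∙ v := by
  have hw0 : w ≠ ⊥ := by rintro rfl; simp at hw
  have : FiniteDimensional K w := Module.finite_of_finrank_eq_succ hw
  obtain ⟨v, hvw, hv⟩ := Submodule.exists_mem_ne_zero_of_ne_bot hw0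
  refine ⟨v, hv, (Submodule.eq_of_le_of_finrank_eq ?_ ?_).symm⟩
  · exact (Submodule.span_singleton_le_iff_mem v w).2 hvw
  · rw [finrank_span_singleton hv, hw]

section Counting

variable {K V : Type*} [Field K] [Fintype K] [AddCommGroup V] [Module K V] [Finite V]

theorem ncard_setOf_mem_and_ne_zero (S : Submodule K V) :
    {v | v ∈ S ∧ v ≠ 0}.ncard = Fintype.card K ^ Module.finrank K S - 1 := by
  rw [show {v | v ∈ S ∧ v ≠ 0} = (S : Set V) \ {0} by ext; simp,
    Set.ncard_sdiff_singleton_of_mem S.zero_mem, ← Nat.card_coe_set_eq, SetLike.coe_sort_coe]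
  have : Fintype S := Fintype.ofFinite ↥S
  rw [Nat.card_eq_fintype_card, Module.card_eq_pow_finrank (K := K) (V := S)]

theorem ncard_mul_eq_of_finrank_inf_eq (𝒜 : Set (Submodule K V)) (y : Submodule K V)
    {m N : ℕ} (h𝒜 : ∀ x ∈ 𝒜, Module.finrank K ↥(x ⊓ y) = m)
    (hN : ∀ v ∈ y, v ≠ 0 → {x | x ∈ 𝒜 ∧ v ∈ x}.ncard = N) :
    𝒜.ncard * (Fintype.card K ^ m - 1) =
      (Fintype.card K ^ Module.finrank K y - 1) * N := by
  classical
  have : Fintype V := Fintype.ofFinite V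
  have : Fintype (Submodule K V) := Fintype.ofFinite _
  rw [← ncard_setOf_mem_and_ne_zero y, Set.ncard_eq_toFinset_card', Set.ncard_eq_toFinset_card']
  refine Finset.card_mul_eq_card_mul (fun x v => v ∈ x) (fun x hx => ?_) (fun v hv => ?_)
  · rw [← h𝒜 x (by simpa using hx), ← ncard_setOf_mem_and_ne_zero, Set.ncard_eq_toFinset_card']
    congr 1; ext v
    simp only [Finset.bipartiteAbove, Set.toFinset_ofPred, Finset.mem_filter, Finset.mem_univ,
      true_and, Submodule.mem_inf]
    tauto
  · simp only [Set.mem_toFinset, Set.mem_ofPred_eq] at hv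
    rw [← hN v hv.1 hv.2, Set.ncard_eq_toFinset_card']
    congr 1; ext x; simp [Finset.bipartiteBelow]

end Counting

theorem ncard_setOf_apply_mem_eq_of_map_mem_iff {R M : Type*} [Semiring R] [AddCommMonoid M]
    [Module R M] {𝒜 : Set (Submodule R M)} (e : M ≃ₗ[R] M)
    (h𝒜 : ∀ x, x.map (e : M →ₗ[R] M) ∈ 𝒜 ↔ x ∈ 𝒜) (v : M) : {x | x ∈ 𝒜 ∧ e v ∈ x}.ncard = {x | x ∈ 𝒜 ∧ v ∈ x}.ncard := by
  rw [← Nat.card_coe_set_eq, ← Nat.card_coe_set_eq]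
  refine Nat.card_congr ((Submodule.orderIsoMapComap e).toEquiv.subtypeEquiv fun x => ?_).symm
  simp [h𝒜]

theorem finrank_map_inf_of_map_eq {R M : Type*} [Ring R] [AddCommGroup M] [Module R M]
    (e : M ≃ₗ[R] M) {y : Submodule R M} (hy : y.map (e : M →ₗ[R] M) = y) (x : Submodule R M) :
    Module.finrank R ↥(x.map (e : M →ₗ[R] M) ⊓ y) = Module.finrank R ↥(x ⊓ y) := by
  rw [← hy, ← Submodule.map_inf _ e.injective, hy, LinearEquiv.finrank_map_eq]

section Symplectic

variable {n : ℕ}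

theorem symp_comm (a b : PV n) : symp a b = symp b a := by
  simp only [symp, mul_comm, add_comm]

theorem symp_add_left (a a' b : PV n) : symp (a + a') b = symp a b + symp a' b := by
  simp only [symp, Prod.fst_add, Prod.snd_add, Pi.add_apply, add_mul, Finset.sum_add_distrib]
  ring

theorem symp_smul_left (c : F2) (a b : PV n) : symp (c • a) b = c * symp a b := by
  simp only [symp, Prod.smul_fst, Prod.smul_snd, Pi.smul_apply, smul_eq_mul, mul_add,
    Finset.mul_sum, mul_assoc]

theorem symp_add_right (a b b' : PV n) : symp a (b + b') = symp a b + symp a b' := by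
  rw [symp_comm, symp_add_left, symp_comm b, symp_comm b']

theorem symp_smul_right (c : F2) (a b : PV n) : symp a (c • b) = c * symp a b := by
  rw [symp_comm, symp_smul_left, symp_comm]

theorem symp_self (a : PV n) : symp a a = 0 := by
  rw [symp, ← CharTwo.add_self_eq_zero (∑ i, a.1 i * a.2 i)]
  simp only [mul_comm]

theorem exists_symp_eq_one {v : PV n} (hv : v ≠ 0) : ∃ u, symp u v = 1 := by
  have eq_one : ∀ x : F2, x ≠ 0 → x = 1 := by decide
  by_cases h : v.1 = 0
  · obtain ⟨j, hj⟩ := Function.ne_iff.mp (fun h' => hv (Prod.ext h h') : v.2 ≠ 0)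
    exact ⟨(Pi.single j 1, 0), by simpa [symp, Pi.single_apply] using eq_one _ hj⟩
  · obtain ⟨j, hj⟩ := Function.ne_iff.mp h
    exact ⟨(0, Pi.single j 1), by simpa [symp, Pi.single_apply] using eq_one _ hj⟩

theorem exists_symp_eq_one_and_symp_eq_one {v₁ v₂ : PV n} (h₁ : v₁ ≠ 0) (h₂ : v₂ ≠ 0) :
    ∃ u, symp u v₁ = 1 ∧ symp u v₂ = 1 := by
  obtain ⟨a, ha⟩ := exists_symp_eq_one h₁
  obtain ⟨b, hb⟩ := exists_symp_eq_one h₂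
  have eq_zero : ∀ x : F2, x ≠ 1 → x = 0 := by decide
  by_cases hav₂ : symp a v₂ = 1
  · exact ⟨a, ha, hav₂⟩
  by_cases hbv₁ : symp b v₁ = 1
  · exact ⟨b, hbv₁, hb⟩
  refine ⟨a + b, ?_, ?_⟩ <;>
    simp only [symp_add_left, ha, hb, eq_zero _ hav₂, eq_zero _ hbv₁, add_zero, zero_add]

/-- For `symp u d = 0` this is the product of the transvections along `u`, `d` and `u + d`. -/
def pairTransvection (u d : PV n) : PV n →ₗ[F2] PV n where
  toFun z := z + symp z u • d + symp z d • u
  map_add' a b := by simp only [symp_add_left, add_smul]; abel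
  map_smul' c a := by simp only [symp_smul_left, RingHom.id_apply, mul_smul, smul_add]

variable {u d : PV n}

theorem pairTransvection_apply (z : PV n) :
    pairTransvection u d z = z + symp z u • d + symp z d • u := rfl

theorem symp_pairTransvection_apply_left (hud : symp u d = 0) (z : PV n) :
    symp (pairTransvection u d z) u = symp z u := by
  simp only [pairTransvection_apply, symp_add_left, symp_smul_left, symp_self, symp_comm d u, hud,
    mul_zero, add_zero]

theorem symp_pairTransvection_apply_right (hud : symp u d = 0) (z : PV n) :
    symp (pairTransvection u d z) d = symp z d := by
  simp only [pairTransvection_apply, symp_add_left, symp_smul_left, symp_self, hud,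
    mul_zero, add_zero]

theorem pairTransvection_involutive (hud : symp u d = 0) :
    Function.Involutive (pairTransvection u d) := by
  intro z
  rw [pairTransvection_apply (pairTransvection u d z), symp_pairTransvection_apply_left hud,
    symp_pairTransvection_apply_right hud, pairTransvection_apply]
  match_scalars <;> simp [CharTwo.add_self_eq_zero]

theorem symp_pairTransvection (hud : symp u d = 0) (a b : PV n) :
    symp (pairTransvection u d a) (pairTransvection u d b) = symp a b := by
  rw [pairTransvection_apply b, symp_add_right, symp_add_right, symp_smul_right, symp_smul_right,
    symp_pairTransvection_apply_left hud, symp_pairTransvection_apply_right hud,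
    pairTransvection_apply a, symp_add_left, symp_add_left, symp_smul_left, symp_smul_left,
    symp_comm d b, symp_comm u b]
  linear_combination (symp a u * symp b d + symp a d * symp b u) * CharTwo.two_eq_zero (R := F2)

theorem exists_symp_equiv_map_eq_self_apply_eq {y : Submodule F2 (PV n)} (hy : IsIsotropic y)
    {v₁ v₂ : PV n} (h₁ : v₁ ∈ y) (h₂ : v₂ ∈ y) (hv₁ : v₁ ≠ 0) (hv₂ : v₂ ≠ 0) :
    ∃ e : PV n ≃ₗ[F2] PV n, (∀ a b, symp (e a) (e b) = symp a b) ∧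
      y.map (e : PV n →ₗ[F2] PV n) = y ∧ e v₁ = v₂ := by
  obtain ⟨u, hu₁, hu₂⟩ := exists_symp_eq_one_and_symp_eq_one hv₁ hv₂
  have hd : v₁ + v₂ ∈ y := y.add_mem h₁ h₂
  have hud : symp u (v₁ + v₂) = 0 := by
    rw [symp_add_right, hu₁, hu₂, CharTwo.add_self_eq_zero]
  have hy_apply : ∀ z ∈ y, pairTransvection u (v₁ + v₂) z = z + symp z u • (v₁ + v₂) :=
    fun z hz => by rw [pairTransvection_apply, hy z hz _ hd, zero_smul, add_zero]
  refine ⟨.ofInvolutive _ (pairTransvection_involutive hud), symp_pairTransvection hud, ?_, ?_⟩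
  · refine Submodule.eq_of_le_of_finrank_eq ?_ (LinearEquiv.finrank_map_eq _ _)
    rintro _ ⟨z, hz, rfl⟩
    simp only [LinearEquiv.coe_coe, LinearEquiv.coe_ofInvolutive, hy_apply z hz]
    exact y.add_mem hz (y.smul_mem _ hd)
  · simp only [LinearEquiv.coe_ofInvolutive, hy_apply v₁ h₁, symp_comm v₁, hu₁]
    match_scalars <;> simp [CharTwo.add_self_eq_zero]

theorem isIsotropic_map_iff {e : PV n ≃ₗ[F2] PV n} (he : ∀ a b, symp (e a) (e b) = symp a b)
    {x : Submodule F2 (PV n)} : IsIsotropic (x.map (e : PV n →ₗ[F2] PV n)) ↔ IsIsotropic x := by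
  refine ⟨fun h a ha b hb => ?_, ?_⟩
  · rw [← he]
    exact h _ (Submodule.mem_map_of_mem ha) _ (Submodule.mem_map_of_mem hb)
  · rintro h _ ⟨a, ha, rfl⟩ _ ⟨b, hb, rfl⟩
    exact (he a b).trans (h a ha b hb)

theorem map_mem_Lset_iff {e : PV n ≃ₗ[F2] PV n} (he : ∀ a b, symp (e a) (e b) = symp a b)
    {x : Submodule F2 (PV n)} {k : ℕ} : x.map (e : PV n →ₗ[F2] PV n) ∈ Lset n k ↔ x ∈ Lset n k := by
  simp only [Lset, Set.mem_ofPred_eq, isIsotropic_map_iff he, LinearEquiv.finrank_map_eq]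

end Symplectic

/-- For even `n ≥ 4`, `w ∈ L^n_1`, and `y ∈ L^n_n` with `w ⊆ y`:
`|{x ∈ L^n_n : dim(x∩y) = n/2}| ≥ 2^{n/2} · |{x ∈ L^n_n : w ⊆ x, dim(x∩y) = n/2}|`,
i.e. `Q/(|L^n_n|·Δ(G_w)) ≥ 2^{n/2}`. -/
theorem half_distance_degree_ratio :
    ∀ n : ℕ, Even n → 4 ≤ n → ∀ w ∈ Lset n 1, ∀ y ∈ Lset n n, w ≤ y →
      Nat.card {x : Submodule F2 (PV n) |
          x ∈ Lset n n ∧ Module.finrank F2 ↥(x ⊓ y) = n / 2} ≥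
        2 ^ (n / 2) *
          Nat.card {x : Submodule F2 (PV n) |
            x ∈ Lset n n ∧ w ≤ x ∧ Module.finrank F2 ↥(x ⊓ y) = n / 2} := by
  intro n hn hn4 w hw y hy hwy
  obtain ⟨k, rfl⟩ := hn
  obtain ⟨w₀, hw₀, rfl⟩ := exists_eq_span_singleton_of_finrank_eq_one hw.2
  rw [show (k + k) / 2 = k by omega, Nat.card_coe_set_eq, Nat.card_coe_set_eq]
  set 𝒜 := {x : Submodule F2 (PV (k + k)) |
    x ∈ Lset (k + k) (k + k) ∧ Module.finrank F2 ↥(x ⊓ y) = k}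
  have h𝒜w₀ : {x | x ∈ Lset (k + k) (k + k) ∧ F2 ∙ w₀ ≤ x ∧ Module.finrank F2 ↥(x ⊓ y) = k} =
      {x | x ∈ 𝒜 ∧ w₀ ∈ x} := by
    ext x
    simp only [Set.mem_ofPred_eq, 𝒜, Submodule.span_singleton_le_iff_mem]
    tauto
  have hdeg : ∀ v ∈ y, v ≠ 0 → {x | x ∈ 𝒜 ∧ v ∈ x}.ncard = {x | x ∈ 𝒜 ∧ w₀ ∈ x}.ncard := by
    intro v hv hv0
    obtain ⟨e, he, hey, rfl⟩ := exists_symp_equiv_map_eq_self_apply_eq hy.1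
      (hwy (Submodule.mem_span_singleton_self w₀)) hv hw₀ hv0
    refine ncard_setOf_apply_mem_eq_of_map_mem_iff e (fun x => ?_) w₀
    rw [Set.mem_ofPred_eq, map_mem_Lset_iff he, finrank_map_inf_of_map_eq e hey]
    rfl
  have hcount := ncard_mul_eq_of_finrank_inf_eq 𝒜 y (fun x hx => hx.2) hdeg
  have hfactor : 2 ^ (k + k) - 1 = (2 ^ k - 1) * (2 ^ k + 1) := by
    rw [pow_add, mul_comm (2 ^ k - 1), ← Nat.mul_self_sub_mul_self_eq, one_mul]
  rw [ZMod.card, hy.2, hfactor, mul_assoc, mul_comm 𝒜.ncard] at hcount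
  have hq : 1 < 2 ^ k := Nat.one_lt_two_pow (by omega)
  calc 𝒜.ncard = (2 ^ k + 1) * {x | x ∈ 𝒜 ∧ w₀ ∈ x}.ncard :=
        Nat.eq_of_mul_eq_mul_left (by omega) hcount
    _ ≥ 2 ^ k * {x | x ∈ 𝒜 ∧ w₀ ∈ x}.ncard := Nat.mul_le_mul_right _ (Nat.le_succ _)
    _ = _ := by rw [h𝒜w₀]
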